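/- Let a be real with √((1 + √5 − √(2√5 + 2))/2) ≤ a ≤ √((1 + √5 + √(2√5 + 2))/2), and let x₁ be a complex number with |x₁| = a and x₁² ≠ −1. Set w = x₁ + x₁⁻¹ and y₁₋ = (−(2 + w²) − (4 + w⁴)^{1/2}) / (2w), where z^{1/2} denotes the principal square root. Then |y₁₋| ≥ 1. -/

import Mathlib

/-!
Write `u = 2 + w²` and `s = (4 + w⁴)^{1/2}`. The two roots `-(u ± s)/(2w)` have product
`(u² - s²)/(4w²) = 1`, so `|y₁₋| ≥ 1` amounts to `|u - s| ≤ |u + s|`, i.e. `0 ≤ Re (u s̄)`.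
When `Re w² > 0` this follows from `Re s ≥ 0`, since then `Re s · Im s = Re w² · Im w²` forces
`Im s` to have the sign of `Im w²`. When `Re w² ≤ 0` one checks by squaring that `Re (u s̄) ≥ 0`
as soon as `|w²| ≤ 2`. Finally, with `z = x₁² = ρ e^{iθ}` one has `w² = z + 2 + z⁻¹`,
`|w²| = ρ + ρ⁻¹ + 2 cos θ` and `Re w² = 2 + (ρ + ρ⁻¹) cos θ`; the bounds on `a` say exactly
`ρ + ρ⁻¹ ≤ 1 + √5`, which gives `|w²| ≤ 2` whenever `Re w² ≤ 0`.
-/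

open ComplexConjugate

lemma add_inv_le_of_mem_Icc {K D r : ℝ} (hD : D ^ 2 = K ^ 2 - 4) (hr : 0 < r)
    (h₁ : (K - D) / 2 ≤ r) (h₂ : r ≤ (K + D) / 2) : r + r⁻¹ ≤ K := by
  have hquad : r ^ 2 + 1 ≤ K * r := by
    nlinarith [mul_nonneg (sub_nonneg.2 h₁) (sub_nonneg.2 h₂)]
  rw [← sub_nonneg]
  have : K - (r + r⁻¹) = (K * r - (r ^ 2 + 1)) / r := by field_simp
  rw [this]
  exact div_nonneg (by linarith) hr.le

lemma add_two_mul_le_two_of_le_one_add_sqrt_five {K t : ℝ} (hK₀ : 0 < K) (hK : K ≤ 1 + √5)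
    (ht : 2 + K * t ≤ 0) : K + 2 * t ≤ 2 := by
  have h5 : √5 ^ 2 = 5 := Real.sq_sqrt (by norm_num)
  have h1 : 1 ≤ √5 := Real.one_lt_sqrt_two.le.trans (Real.sqrt_le_sqrt (by norm_num))
  refine le_of_mul_le_mul_left ?_ hK₀
  nlinarith [mul_nonneg (sub_nonneg.2 hK) (by linarith : (0 : ℝ) ≤ √5 + K - 1)]

lemma two_add_mul_add_mul_nonneg_of_nonpos {X Y σ τ : ℝ} (hσ : 0 ≤ σ)
    (hre : σ ^ 2 - τ ^ 2 = 4 + X ^ 2 - Y ^ 2) (him : σ * τ = X * Y)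
    (hX : X ≤ 0) (hXY : X ^ 2 + Y ^ 2 ≤ 4) : 0 ≤ (2 + X) * σ + Y * τ := by
  have hX₂ : 0 ≤ 2 + X := by nlinarith [sq_nonneg Y]
  have hM : (σ ^ 2 + τ ^ 2) ^ 2 = (4 + X ^ 2 - Y ^ 2) ^ 2 + 4 * (X * Y) ^ 2 := by
    rw [← hre, ← him]; ring
  -- `2σ² = A + M` with `A = 4 + X² - Y²` and `M = σ² + τ² = √(A² + 4X²Y²)`; the defect of the
  -- squared inequality below is `-8XY²(4 - X² - Y²) ≥ 0`.
  have hdefect : 0 ≤ -X * Y ^ 2 * (8 - 2 * X ^ 2 - 2 * Y ^ 2) :=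
    mul_nonneg (mul_nonneg (neg_nonneg.2 hX) (sq_nonneg Y)) (by linarith)
  have hbound := abs_le_of_sq_le_sq'
    (a := (2 + X) * (4 + X ^ 2 - Y ^ 2) + 2 * X * Y ^ 2) (b := (2 + X) * (σ ^ 2 + τ ^ 2))
    (by nlinarith) (by positivity)
  have hσ₂ : 0 ≤ (2 + X) * σ ^ 2 + X * Y ^ 2 := by nlinarith [hbound.1]
  rcases hσ.eq_or_lt with rfl | hσ₀
  · nlinarith [sq_nonneg τ, sq_nonneg X]
  · have hmul : ((2 + X) * σ + Y * τ) * σ = (2 + X) * σ ^ 2 + X * Y ^ 2 := by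
      linear_combination Y * him
    exact nonneg_of_mul_nonneg_left (hmul ▸ hσ₂) hσ₀

lemma two_add_mul_add_mul_nonneg_of_pos {X Y σ τ : ℝ} (hσ : 0 ≤ σ)
    (hre : σ ^ 2 - τ ^ 2 = 4 + X ^ 2 - Y ^ 2) (him : σ * τ = X * Y) (hX : 0 < X) :
    0 ≤ (2 + X) * σ + Y * τ := by
  rcases hσ.eq_or_lt with rfl | hσ₀
  · obtain rfl : Y = 0 := (mul_eq_zero.1 (by linarith : X * Y = 0)).resolve_left hX.ne'
    nlinarith [sq_nonneg τ]
  · have hYτ : 0 ≤ Y * τ := by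
      refine nonneg_of_mul_nonneg_left ?_ hσ₀
      have : Y * τ * σ = X * Y ^ 2 := by linear_combination Y * him
      rw [this]; positivity
    have : 0 ≤ (2 + X) * σ := by positivity
    linarith

lemma Complex.re_cpow_one_half_nonneg (z : ℂ) : 0 ≤ (z ^ (1 / 2 : ℂ)).re := by
  rcases eq_or_ne z 0 with rfl | hz
  · simp
  rw [Complex.cpow_def_of_ne_zero hz, Complex.exp_re]
  refine mul_nonneg (Real.exp_nonneg _) (Real.cos_nonneg_of_mem_Icc ?_)
  have him : (Complex.log z * (1 / 2)).im = z.arg / 2 := by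
    simp [Complex.log_im, div_eq_mul_inv]
  rw [him]
  constructor <;> linarith [Complex.neg_pi_lt_arg z, Complex.arg_le_pi z, Real.pi_pos]

lemma Complex.norm_add_two_add_inv {z : ℂ} (hz : z ≠ 0) :
    ‖z + 2 + z⁻¹‖ = ‖z‖ + ‖z‖⁻¹ + 2 * (z.re / ‖z‖) := by
  have hz' : ‖z‖ ≠ 0 := norm_ne_zero_iff.2 hz
  have hsq : ‖z + 1‖ ^ 2 = ‖z‖ ^ 2 + 2 * z.re + 1 := by
    rw [Complex.sq_norm, Complex.sq_norm, Complex.normSq_add]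
    simp only [map_one, mul_one]
    ring
  rw [show z + 2 + z⁻¹ = (z + 1) ^ 2 / z by field_simp; ring, norm_div, norm_pow, hsq]
  field_simp
  ring

lemma Complex.re_add_two_add_inv {z : ℂ} (hz : z ≠ 0) :
    (z + 2 + z⁻¹).re = 2 + (‖z‖ + ‖z‖⁻¹) * (z.re / ‖z‖) := by
  have hz' : ‖z‖ ≠ 0 := norm_ne_zero_iff.2 hz
  rw [Complex.add_re, Complex.add_re, Complex.inv_re, ← Complex.sq_norm]
  simp only [Complex.re_ofNat]
  field_simp
  ring

lemma Complex.norm_add_two_add_inv_le_two {z : ℂ} (hz : z ≠ 0) (hK : ‖z‖ + ‖z‖⁻¹ ≤ 1 + √5)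
    (hre : (z + 2 + z⁻¹).re ≤ 0) : ‖z + 2 + z⁻¹‖ ≤ 2 := by
  rw [Complex.re_add_two_add_inv hz] at hre
  rw [Complex.norm_add_two_add_inv hz]
  exact add_two_mul_le_two_of_le_one_add_sqrt_five (by positivity) hK hre

lemma Complex.re_two_add_mul_conj_nonneg {W s : ℂ} (hs : s ^ 2 = 4 + W ^ 2) (hs_re : 0 ≤ s.re)
    (hW : W.re ≤ 0 → ‖W‖ ≤ 2) : 0 ≤ ((2 + W) * conj s).re := by
  have hre : s.re ^ 2 - s.im ^ 2 = 4 + W.re ^ 2 - W.im ^ 2 := by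
    have := congrArg Complex.re hs
    simp only [sq, Complex.mul_re, Complex.add_re, Complex.re_ofNat] at this
    linear_combination this
  have him : s.re * s.im = W.re * W.im := by
    have := congrArg Complex.im hs
    simp only [sq, Complex.mul_im, Complex.add_im, Complex.im_ofNat] at this
    linear_combination this / 2
  have hprod : ((2 + W) * conj s).re = (2 + W.re) * s.re + W.im * s.im := by
    simp only [Complex.mul_re, Complex.add_re, Complex.add_im, Complex.conj_re,
      Complex.conj_im, Complex.re_ofNat, Complex.im_ofNat]
    ring
  rw [hprod]
  rcases le_or_gt W.re 0 with hX | hX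
  · have hXY : W.re ^ 2 + W.im ^ 2 ≤ 4 := by
      have h := pow_le_pow_left₀ (norm_nonneg W) (hW hX) 2
      rw [Complex.sq_norm, Complex.normSq_apply] at h
      nlinarith
    exact two_add_mul_add_mul_nonneg_of_nonpos hs_re hre him hX hXY
  · exact two_add_mul_add_mul_nonneg_of_pos hs_re hre him hX

lemma Complex.norm_sub_le_norm_add_of_re_mul_conj_nonneg {u s : ℂ} (h : 0 ≤ (u * conj s).re) :
    ‖u - s‖ ≤ ‖u + s‖ := by
  rw [Complex.norm_def, Complex.norm_def, Complex.normSq_sub, Complex.normSq_add]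
  exact Real.sqrt_le_sqrt (by linarith)

lemma norm_le_norm_add_of_mul_sub_eq_sq {𝕜 : Type*} [NormedDivisionRing 𝕜] {u s d : 𝕜}
    (h : (u + s) * (u - s) = d ^ 2) (hle : ‖u - s‖ ≤ ‖u + s‖) : ‖d‖ ≤ ‖u + s‖ := by
  have hsq : ‖d‖ ^ 2 ≤ ‖u + s‖ ^ 2 := by
    rw [← norm_pow, ← h, norm_mul, sq]
    exact mul_le_mul_of_nonneg_left hle (norm_nonneg _)
  exact pow_le_pow_iff_left₀ (norm_nonneg _) (norm_nonneg _) two_ne_zero |>.1 hsq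

/-- For `a` in the stated range, `|x₁| = a` and `x₁² ≠ −1`, setting `w = x₁ + x₁⁻¹`,
the root `y₁₋ = (−(2 + w²) − (4 + w⁴)^{1/2})/(2w)` (principal branch of the square
root) satisfies `|y₁₋| ≥ 1`. -/
theorem stmt_12 (a : ℝ)
    (ha1 : Real.sqrt ((1 + Real.sqrt 5 - Real.sqrt (2 * Real.sqrt 5 + 2)) / 2) ≤ a)
    (ha2 : a ≤ Real.sqrt ((1 + Real.sqrt 5 + Real.sqrt (2 * Real.sqrt 5 + 2)) / 2))
    (x₁ : ℂ) (hx₁ : ‖x₁‖ = a) (hx₁' : x₁ ^ 2 ≠ -1) :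
    1 ≤ ‖(-(2 + (x₁ + x₁⁻¹) ^ 2) -
      (4 + (x₁ + x₁⁻¹) ^ 4) ^ ((1 : ℂ) / 2)) / (2 * (x₁ + x₁⁻¹))‖ := by
  set w := x₁ + x₁⁻¹
  set s := (4 + w ^ 4) ^ ((1 : ℂ) / 2)
  have hD : √(2 * √5 + 2) ^ 2 = (1 + √5) ^ 2 - 4 := by
    rw [Real.sq_sqrt (by positivity), add_sq, Real.sq_sqrt (by norm_num)]; ring
  have hlo : 0 < (1 + √5 - √(2 * √5 + 2)) / 2 := by
    nlinarith [Real.sqrt_nonneg (2 * √5 + 2), Real.sqrt_nonneg 5]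
  have ha : 0 < a := (Real.sqrt_pos.2 hlo).trans_le ha1
  have hx₁0 : x₁ ≠ 0 := norm_pos_iff.1 (hx₁ ▸ ha)
  have hw0 : w ≠ 0 := by
    intro h
    have hx₁w : x₁ ^ 2 + 1 = x₁ * w := by simp only [w]; field_simp
    exact hx₁' (by linear_combination hx₁w + x₁ * h)
  have hK : ‖x₁ ^ 2‖ + ‖x₁ ^ 2‖⁻¹ ≤ 1 + √5 := by
    rw [norm_pow, hx₁]
    refine add_inv_le_of_mem_Icc hD (by positivity) ?_ ?_
    · exact (Real.sqrt_le_left ha.le).1 ha1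
    · exact (Real.le_sqrt ha.le (by positivity)).1 ha2
  have hw2 : w ^ 2 = x₁ ^ 2 + 2 + (x₁ ^ 2)⁻¹ := by
    simp only [w]; field_simp; ring
  have hdisk : (w ^ 2).re ≤ 0 → ‖w ^ 2‖ ≤ 2 :=
    hw2 ▸ Complex.norm_add_two_add_inv_le_two (pow_ne_zero 2 hx₁0) hK
  have hs : s ^ 2 = 4 + (w ^ 2) ^ 2 := by
    simp only [s, one_div, Complex.cpow_ofNat_inv_pow]
    ring
  have hle : ‖2 + w ^ 2 - s‖ ≤ ‖2 + w ^ 2 + s‖ :=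
    Complex.norm_sub_le_norm_add_of_re_mul_conj_nonneg <|
      Complex.re_two_add_mul_conj_nonneg hs (Complex.re_cpow_one_half_nonneg _) hdisk
  have h2w : ‖2 * w‖ ≤ ‖2 + w ^ 2 + s‖ :=
    norm_le_norm_add_of_mul_sub_eq_sq (by linear_combination -hs) hle
  rw [show -(2 + w ^ 2) - s = -(2 + w ^ 2 + s) by ring, norm_div, norm_neg,
    one_le_div (norm_pos_iff.2 (mul_ne_zero two_ne_zero hw0))]
  exact h2w
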